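/- arXiv:0709.3241 — 3 statements merged into one kernel-verified Lean document; each statement's English description precedes it below -/
import Mathlib

section
/- Let a = (aₙ) be a bounded complex sequence such that the set of shifted sequences {σᵏa : k ∈ ℤ} is relatively compact in ℓ^∞(ℤ) (where (σᵏa)ₙ = a_{n+k}). Then for any two sequences of intervals whose lengths tend to infinity, the averages (1/|I_j|) Σ_{n∈I_j} aₙ converge and the limits agree; i.e. the mean Av(a) exists. -/
/-!
A finite `ε`-net of the orbit `{σᵏa}` shows that the `ε`-almost periods of `a` are relatively
dense. Moving a window of length `L` onto an almost period changes its sum by at most `L ε`, and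
moving it by a bounded amount changes it by `O(1)`; so the averages of a fixed length `L` vary by
at most `ε + O(1/L)` with the starting point. Averaging the length-`L` averages over the starting
points of a length-`L'` window gives the same double average as the other way round, which
compares lengths `L` and `L'`. Hence the averages are uniformly Cauchy and converge uniformly in
the starting point.
-/

open Filter Topology Finset BoundedContinuousFunction

namespace AlmostPeriodicMean

section Sums

variable {E : Type*} [NormedAddCommGroup E]

def windowSum (f : ℤ → E) (L : ℕ) (M : ℤ) : E := ∑ j ∈ range L, f (M + j)

theorem windowSum_add (f : ℤ → E) (m n : ℕ) (M : ℤ) :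
    windowSum f (m + n) M = windowSum f m M + windowSum f n (M + m) := by
  simp only [windowSum, sum_range_add, Nat.cast_add, add_assoc]

theorem norm_windowSum_le (a : ℤ →ᵇ E) (L : ℕ) (M : ℤ) : ‖windowSum a L M‖ ≤ L * ‖a‖ := by
  simpa [windowSum] using norm_sum_le_of_le (range L) fun j _ => a.norm_coe_le_norm (M + j)

theorem norm_windowSum_sub_windowSum_le (a : ℤ →ᵇ E) (L : ℕ) (M M' : ℤ) :
    ‖windowSum a L M' - windowSum a L M‖ ≤ 2 * ‖a‖ * |(M' : ℝ) - M| := by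
  wlog hMM' : M ≤ M' generalizing M M'
  · rw [norm_sub_rev, abs_sub_comm]
    exact this M' M (by omega)
  obtain ⟨d, rfl⟩ := Int.exists_add_of_le hMM'
  -- both differences are windows of length `d` at the two ends of the window of length `d + L`
  have hshift : windowSum a L (M + d) - windowSum a L M =
      windowSum a d (M + L) - windowSum a d M := by
    have h := windowSum_add a d L M
    rw [add_comm d L, windowSum_add] at h
    rw [sub_eq_sub_iff_add_eq_add, add_comm, ← h, add_comm]
  calc ‖windowSum a L (M + d) - windowSum a L M‖
      ≤ ‖windowSum a d (M + L)‖ + ‖windowSum a d M‖ := hshift ▸ norm_sub_le _ _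
    _ ≤ d * ‖a‖ + d * ‖a‖ := add_le_add (norm_windowSum_le a d _) (norm_windowSum_le a d M)
    _ = 2 * ‖a‖ * |((M + d : ℤ) : ℝ) - M| := by
        simp only [Int.cast_add, Int.cast_natCast, add_sub_cancel_left, Nat.abs_cast]; ring

def IsAlmostPeriod (f : ℤ → E) (ε : ℝ) (p : ℤ) : Prop := ∀ n, ‖f (n + p) - f n‖ ≤ ε

theorem norm_windowSum_add_sub_le {f : ℤ → E} {ε : ℝ} {p : ℤ} (hp : IsAlmostPeriod f ε p)
    (L : ℕ) (M : ℤ) : ‖windowSum f L (M + p) - windowSum f L M‖ ≤ L * ε := by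
  rw [windowSum, windowSum, ← sum_sub_distrib]
  simpa [add_right_comm M p] using norm_sum_le_of_le (range L) fun j _ => hp (M + j)

theorem norm_windowSum_sub_le_of_almostPeriods (a : ℤ →ᵇ E) {ε C : ℝ}
    (hC : ∀ m : ℤ, ∃ p : ℤ, |(m : ℝ) - p| ≤ C ∧ IsAlmostPeriod a ε p) (L : ℕ) (M M' : ℤ) :
    ‖windowSum a L M' - windowSum a L M‖ ≤ L * ε + 2 * ‖a‖ * C := by
  obtain ⟨p, hpC, hp⟩ := hC (M' - M)
  have hfar : ‖windowSum a L M' - windowSum a L (M + p)‖ ≤ 2 * ‖a‖ * C := by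
    have hdist : (M' : ℝ) - (M + p : ℤ) = (M' - M : ℤ) - p := by push_cast; ring
    refine (norm_windowSum_sub_windowSum_le a L _ _).trans ?_
    rw [hdist]
    gcongr
  calc ‖windowSum a L M' - windowSum a L M‖
      ≤ ‖windowSum a L M' - windowSum a L (M + p)‖ + ‖windowSum a L (M + p) - windowSum a L M‖ :=
        norm_sub_le_norm_sub_add_norm_sub _ _ _
    _ ≤ 2 * ‖a‖ * C + L * ε := add_le_add hfar (norm_windowSum_add_sub_le hp L M)
    _ = L * ε + 2 * ‖a‖ * C := add_comm _ _

theorem exists_isAlmostPeriod_near_of_totallyBounded (a : ℤ →ᵇ E)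
    (htb : TotallyBounded {b : ℤ →ᵇ E | ∃ k : ℤ, ∀ n : ℤ, b n = a (n + k)}) {ε : ℝ} (hε : 0 < ε) :
    ∃ C : ℝ, ∀ m : ℤ, ∃ p : ℤ, |(m : ℝ) - p| ≤ C ∧ IsAlmostPeriod a ε p := by
  obtain ⟨t, hts, htfin, hcov⟩ := Metric.finite_approx_of_totallyBounded htb ε hε
  choose! κ hκ using fun b (hb : b ∈ t) => hts hb
  obtain ⟨C, hC⟩ := (htfin.image fun b => |(κ b : ℝ)|).bddAbove
  refine ⟨C, fun m => ?_⟩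
  let shift : ℤ →ᵇ E := a.compContinuous ⟨(· + m), continuous_of_discreteTopology⟩
  obtain ⟨b, hbt, hb⟩ := Set.mem_iUnion₂.mp (hcov ⟨m, fun n => rfl⟩ : shift ∈ _)
  -- `σᵐa` is `ε`-close to some `σ^{κ b} a` of the net, so `m - κ b` is an `ε`-almost period
  refine ⟨m - κ b, ?_, fun n => ?_⟩
  · simpa using hC ⟨b, hbt, rfl⟩
  · have h := (dist_coe_le_dist (n - κ b)).trans (Metric.mem_ball.mp hb).le
    rwa [hκ b hbt, dist_eq_norm, sub_add_cancel, compContinuous_apply, ContinuousMap.coe_mk,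
      show n - κ b + m = n + (m - κ b) by ring] at h

theorem sum_Icc_eq_windowSum (f : ℤ → E) (M N : ℤ) :
    ∑ n ∈ Icc M N, f n = windowSum f (N - M + 1).toNat M := by
  refine sum_nbij' (fun n => (n - M).toNat) (fun j => M + j) ?_ ?_ ?_ ?_ ?_ <;>
    intro n hn <;> simp only [mem_Icc, mem_range] at hn ⊢
  all_goals first | omega | (congr 1; omega)

end Sums

section Averages

variable {E : Type*} [NormedAddCommGroup E] [NormedSpace ℝ E]

noncomputable def windowAvg (f : ℤ → E) (L : ℕ) (M : ℤ) : E := (L : ℝ)⁻¹ • windowSum f L M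

theorem norm_sub_average_le {x : E} {y : ℕ → E} {n : ℕ} {δ : ℝ} (hn : 0 < n)
    (h : ∀ k < n, ‖x - y k‖ ≤ δ) : ‖x - (n : ℝ)⁻¹ • ∑ k ∈ range n, y k‖ ≤ δ := by
  have hn' : (0 : ℝ) < n := Nat.cast_pos.mpr hn
  have hx : x = (n : ℝ)⁻¹ • ∑ _k ∈ range n, x := by
    rw [sum_const, card_range, ← Nat.cast_smul_eq_nsmul ℝ, smul_smul, inv_mul_cancel₀ hn'.ne',
      one_smul]
  rw [hx, ← smul_sub, ← sum_sub_distrib, norm_smul, norm_inv, Real.norm_natCast,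
    inv_mul_le_iff₀ hn']
  simpa using norm_sum_le_of_le (range n) fun k hk => h k (mem_range.mp hk)

theorem average_windowAvg_comm (f : ℤ → E) (L L' : ℕ) (M : ℤ) :
    (L' : ℝ)⁻¹ • ∑ k ∈ range L', windowAvg f L (M + k) =
      (L : ℝ)⁻¹ • ∑ j ∈ range L, windowAvg f L' (M + j) := by
  simp only [windowAvg, windowSum, ← smul_sum, smul_smul, mul_comm (L' : ℝ)⁻¹]
  rw [sum_comm]
  simp only [add_right_comm M]

theorem norm_windowAvg_sub_le_of_oscillation {f : ℤ → E} {δ : ℕ → ℝ}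
    (hδ : ∀ L, 0 < L → ∀ M M', ‖windowAvg f L M - windowAvg f L M'‖ ≤ δ L)
    {L L' : ℕ} (hL : 0 < L) (hL' : 0 < L') (M M' : ℤ) :
    ‖windowAvg f L M - windowAvg f L' M'‖ ≤ δ L + 2 * δ L' := by
  have hlen : ‖windowAvg f L M - windowAvg f L' M‖ ≤ δ L + δ L' := by
    have h₁ := norm_sub_average_le hL' fun k _ => hδ L hL M (M + k)
    have h₂ := norm_sub_average_le hL fun j _ => hδ L' hL' M (M + j)
    rw [average_windowAvg_comm] at h₁
    rw [norm_sub_rev] at h₂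
    exact (norm_sub_le_norm_sub_add_norm_sub _ _ _).trans (add_le_add h₁ h₂)
  calc ‖windowAvg f L M - windowAvg f L' M'‖
      ≤ ‖windowAvg f L M - windowAvg f L' M‖ + ‖windowAvg f L' M - windowAvg f L' M'‖ :=
        norm_sub_le_norm_sub_add_norm_sub _ _ _
    _ ≤ δ L + δ L' + δ L' := add_le_add hlen (hδ L' hL' M M')
    _ = δ L + 2 * δ L' := by ring

theorem norm_windowAvg_sub_le_of_almostPeriods (a : ℤ →ᵇ E) {ε C : ℝ}
    (hC : ∀ m : ℤ, ∃ p : ℤ, |(m : ℝ) - p| ≤ C ∧ IsAlmostPeriod a ε p) {L : ℕ} (hL : 0 < L)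
    (M M' : ℤ) : ‖windowAvg a L M - windowAvg a L M'‖ ≤ ε + 2 * ‖a‖ * C / L := by
  have hL' : (0 : ℝ) < L := Nat.cast_pos.mpr hL
  rw [windowAvg, windowAvg, ← smul_sub, norm_smul, norm_inv, Real.norm_natCast,
    inv_mul_le_iff₀ hL', mul_add, mul_div_cancel₀ _ hL'.ne']
  exact norm_windowSum_sub_le_of_almostPeriods a hC L M' M

theorem exists_forall_norm_windowAvg_sub_le (a : ℤ →ᵇ E)
    (htb : TotallyBounded {b : ℤ →ᵇ E | ∃ k : ℤ, ∀ n : ℤ, b n = a (n + k)}) {ε : ℝ} (hε : 0 < ε) :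
    ∃ ℓ₀ : ℕ, ∀ L ≥ ℓ₀, ∀ L' ≥ ℓ₀, ∀ M M' : ℤ, ‖windowAvg a L M - windowAvg a L' M'‖ ≤ ε := by
  obtain ⟨C, hC⟩ := exists_isAlmostPeriod_near_of_totallyBounded a htb (by positivity : 0 < ε / 6)
  have hlarge : ∀ᶠ L : ℕ in atTop, 0 < L ∧ 2 * ‖a‖ * C / L ≤ ε / 6 :=
    (eventually_gt_atTop 0).and <| (tendsto_const_div_atTop_nhds_zero_nat _).eventually <|
      eventually_le_nhds (by positivity)
  obtain ⟨ℓ₀, hℓ₀⟩ := eventually_atTop.mp hlarge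
  refine ⟨ℓ₀, fun L hL L' hL' M M' => ?_⟩
  obtain ⟨hL0, hLsmall⟩ := hℓ₀ L hL
  obtain ⟨hL'0, hL'small⟩ := hℓ₀ L' hL'
  have := norm_windowAvg_sub_le_of_oscillation
    (fun L hL M M' => norm_windowAvg_sub_le_of_almostPeriods a hC hL M M') hL0 hL'0 M M'
  linarith

theorem exists_tendstoUniformly_windowAvg [CompleteSpace E] (a : ℤ →ᵇ E)
    (htb : TotallyBounded {b : ℤ →ᵇ E | ∃ k : ℤ, ∀ n : ℤ, b n = a (n + k)}) :
    ∃ Λ : E, TendstoUniformly (windowAvg a) (fun _ => Λ) atTop := by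
  have hcauchy : CauchySeq fun L => windowAvg a L 0 := by
    refine Metric.cauchySeq_iff'.mpr fun ε hε => ?_
    obtain ⟨ℓ₀, hℓ₀⟩ := exists_forall_norm_windowAvg_sub_le a htb (half_pos hε)
    refine ⟨ℓ₀, fun L hL => ?_⟩
    rw [dist_eq_norm]
    exact (hℓ₀ L hL ℓ₀ le_rfl 0 0).trans_lt (half_lt_self hε)
  obtain ⟨Λ, hΛ⟩ := cauchySeq_tendsto_of_complete hcauchy
  refine ⟨Λ, Metric.tendstoUniformly_iff.mpr fun ε hε => ?_⟩
  obtain ⟨ℓ₀, hℓ₀⟩ := exists_forall_norm_windowAvg_sub_le a htb (half_pos hε)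
  refine eventually_atTop.mpr ⟨ℓ₀, fun L hL M => ?_⟩
  have hle : dist Λ (windowAvg a L M) ≤ ε / 2 :=
    le_of_tendsto (hΛ.dist tendsto_const_nhds) <| eventually_atTop.mpr
      ⟨ℓ₀, fun L' hL' => (dist_eq_norm _ _).trans_le (hℓ₀ L' hL' L hL 0 M)⟩
  exact hle.trans_lt (half_lt_self hε)

end Averages

end AlmostPeriodicMean

open AlmostPeriodicMean in
/-- If `a` is a bounded complex sequence whose family of shifts `{σᵏa : k ∈ ℤ}` is relatively
compact in `ℓ^∞(ℤ)`, then for every sequence of intervals of `ℤ` whose lengths tend to infinity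
the averages of `a` over the intervals converge, and the limit does not depend on the choice of
the sequence of intervals. -/
theorem stmt10 (a : BoundedContinuousFunction ℤ ℂ)
    (hcpt : IsCompact (closure
      {b : BoundedContinuousFunction ℤ ℂ | ∃ k : ℤ, ∀ n : ℤ, b n = a (n + k)})) :
    ∃ L : ℂ, ∀ M N : ℕ → ℤ, (∀ j, M j ≤ N j) →
      Tendsto (fun j => N j - M j) atTop atTop →
      Tendsto (fun j => (∑ n ∈ Finset.Icc (M j) (N j), a n) / ((N j - M j + 1 : ℤ) : ℂ))
        atTop (𝓝 L) := by
  obtain ⟨Λ, hΛ⟩ := exists_tendstoUniformly_windowAvg a (hcpt.totallyBounded.subset subset_closure)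
  refine ⟨Λ, fun M N hMN hlen => ?_⟩
  have hlength : Tendsto (fun j => (N j - M j + 1).toNat) atTop atTop :=
    tendsto_natCast_atTop_iff.mp <| tendsto_atTop_mono (fun j => Int.self_le_toNat _) <|
      tendsto_atTop_add_const_right _ 1 hlen
  have hterm : ∀ j, (∑ n ∈ Finset.Icc (M j) (N j), a n) / ((N j - M j + 1 : ℤ) : ℂ) =
      windowAvg a (N j - M j + 1).toNat (M j) := fun j => by
    rw [sum_Icc_eq_windowSum, windowAvg, Complex.real_smul, div_eq_inv_mul, Complex.ofReal_inv,
      Complex.ofReal_natCast, ← Int.cast_natCast, Int.toNat_of_nonneg (by linarith [hMN j])]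
  simp only [hterm]
  exact Metric.tendsto_nhds.mpr fun ε hε =>
    (hlength.eventually (Metric.tendstoUniformly_iff.mp hΛ ε hε)).mono fun j hj =>
      dist_comm Λ _ ▸ hj (M j)
end

section
/- Let E ⊆ ℤ be syndetic with constant L, i.e. ⋃_{j=0}^{L-1} (j + E) = ℤ. If t ∈ ℝ/ℤ satisfies |e(nt) - 1| < 1/(3L) for all n ∈ E and ‖t‖ < 1/(3L), then t = 0. -/
/-!
If `t ≠ 0` has `‖t‖ = a`, the multiples `n • t` walk around the circle in steps of length `a`,
so some `n` has `‖n • t‖ > 1/2 - a`. Writing `n = j + m` with `0 ≤ j < L` and `m ∈ E`, and using the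
chord bound `4‖s‖ ≤ |e(s) - 1|`, we get `‖n • t‖ ≤ (L - 1) a + 1/(12L)`. Since `L a < 1/3`, this
gives `1/2 < 1/3 + 1/12`, a contradiction.
-/

open Real

namespace AddCircle

variable {p : ℝ} [hp : Fact (0 < p)]

theorem exists_coe_eq_abs_eq_norm (s : AddCircle p) :
    ∃ x : ℝ, (x : AddCircle p) = s ∧ |x| = ‖s‖ := by
  obtain ⟨hlo, hhi⟩ := (equivIco p (-(p / 2)) s).2
  set x : ℝ := ↑(equivIco p (-(p / 2)) s)
  have hxs : (x : AddCircle p) = s := coe_equivIco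
  refine ⟨x, hxs, ?_⟩
  rw [← hxs, (norm_coe_eq_abs_iff p hp.out.ne').2]
  exact abs_le.2 ⟨by rwa [abs_of_pos hp.out], by rw [abs_of_pos hp.out]; linarith⟩

theorem four_div_mul_norm_le_norm_toCircle_sub_one (s : AddCircle p) :
    4 / p * ‖s‖ ≤ ‖(toCircle s : ℂ) - 1‖ := by
  have hp0 := hp.out
  obtain ⟨x, rfl, hx⟩ := exists_coe_eq_abs_eq_norm s
  have hxp : |x| ≤ p / 2 := by
    simpa [hx, abs_of_pos hp0] using norm_le_half_period p hp0.ne' (x := (x : AddCircle p))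
  have hangle : |π / p * x| ≤ π / 2 := by
    rw [abs_mul, abs_of_pos (by positivity)]
    calc π / p * |x| ≤ π / p * (p / 2) := by gcongr
      _ = π / 2 := by field_simp
  rw [toCircle_apply_mk, Circle.coe_exp, mul_comm _ Complex.I,
    Complex.norm_exp_I_mul_ofReal_sub_one, ← hx, norm_mul, Real.norm_two, Real.norm_eq_abs]
  calc 4 / p * |x| = 2 * (2 / π * |π / p * x|) := by
        rw [abs_mul, abs_of_pos (by positivity : 0 < π / p)]; field_simp; ring
    _ ≤ 2 * |sin (2 * π / p * x / 2)| := by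
        rw [show 2 * π / p * x / 2 = π / p * x by ring]
        gcongr
        exact mul_abs_le_abs_sin hangle

theorem exists_nsmul_norm_gt {s : AddCircle p} (hs : s ≠ 0) :
    ∃ n : ℕ, p / 2 - ‖s‖ < ‖n • s‖ := by
  have hp0 := hp.out
  obtain ⟨x, rfl, hx⟩ := exists_coe_eq_abs_eq_norm s
  have ha : 0 < |x| := abs_pos.2 (by rintro rfl; exact hs (by simp))
  set n := ⌊p / 2 / |x|⌋₊
  refine ⟨n, ?_⟩
  have hle : (n : ℝ) * |x| ≤ p / 2 := (le_div_iff₀ ha).1 (Nat.floor_le (by positivity))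
  have hgt : p / 2 < (n + 1 : ℝ) * |x| := (div_lt_iff₀ ha).1 (Nat.lt_floor_add_one _)
  have hnorm : ‖((n • x : ℝ) : AddCircle p)‖ = n * |x| := by
    rw [(norm_coe_eq_abs_iff p hp0.ne').2] <;> rw [nsmul_eq_mul, abs_mul, Nat.abs_cast]
    rwa [abs_of_pos hp0]
  rw [← coe_nsmul, hnorm, ← hx]
  linarith

end AddCircle

theorem stmt11_general (L : ℕ) (E : Set ℤ)
    (hsyn : ∀ n : ℤ, ∃ j : ℤ, 0 ≤ j ∧ j < L ∧ n - j ∈ E)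
    (t : AddCircle (1 : ℝ))
    (h1 : ∀ n ∈ E, ‖(AddCircle.toCircle (n • t) : ℂ) - 1‖ < 1 / (3 * L))
    (h2 : ‖t‖ < 1 / (3 * L)) :
    t = 0 := by
  by_contra ht
  obtain ⟨n, hn⟩ := AddCircle.exists_nsmul_norm_gt ht
  obtain ⟨j, hj0, hjL, hmE⟩ := hsyn n
  lift j to ℕ using hj0
  have hL : (1 : ℝ) ≤ L := by exact_mod_cast (show (1 : ℤ) ≤ L by omega)
  have hj : (j : ℝ) ≤ L - 1 := by exact_mod_cast (show (j : ℤ) ≤ L - 1 by omega)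
  have hm : ‖((n : ℤ) - j) • t‖ < 1 / (12 * L) := by
    have := (AddCircle.four_div_mul_norm_le_norm_toCircle_sub_one _).trans_lt (h1 _ hmE)
    rw [show 1 / (12 * (L : ℝ)) = 1 / (3 * L) / 4 by field_simp; ring]
    linarith
  have hsplit : n • t = j • t + ((n : ℤ) - j) • t := by
    rw [← natCast_zsmul, ← natCast_zsmul (n := j), ← add_zsmul, add_sub_cancel]
  have hnorm : ‖n • t‖ < (L - 1) * ‖t‖ + 1 / (12 * L) := by
    calc ‖n • t‖ ≤ ‖j • t‖ + ‖((n : ℤ) - j) • t‖ := hsplit ▸ norm_add_le _ _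
      _ < (L - 1) * ‖t‖ + 1 / (12 * L) :=
        add_lt_add_of_le_of_lt (norm_nsmul_le.trans (by gcongr)) hm
  have hLt : L * ‖t‖ < 1 / 3 := by
    rw [lt_div_iff₀ (by positivity)] at h2; linarith
  have h12 : 1 / (12 * (L : ℝ)) ≤ 1 / 12 := by
    gcongr; linarith
  norm_num at hn
  linarith

/-- Let `E ⊆ ℤ` be syndetic with constant `L`, i.e. `⋃_{j=0}^{L-1} (j + E) = ℤ`. If
`t ∈ ℝ/ℤ` satisfies `|e(nt) - 1| < 1/(3L)` for all `n ∈ E` and `‖t‖ < 1/(3L)`, then `t = 0`. -/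
theorem stmt11 (L : ℕ) (hL : 0 < L) (E : Set ℤ)
    (hsyn : ∀ n : ℤ, ∃ j : ℤ, 0 ≤ j ∧ j < L ∧ n - j ∈ E)
    (t : AddCircle (1 : ℝ))
    (h1 : ∀ n ∈ E, ‖(AddCircle.toCircle (n • t) : ℂ) - 1‖ < 1 / (3 * L))
    (h2 : ‖t‖ < 1 / (3 * L)) :
    t = 0 :=
  stmt11_general L E hsyn t h1 h2
end

section
/- The sequence (e(⌊nα⌋β))_{n∈ℤ}, where α and β are real numbers rationally independent together with 1 (i.e. 1, α, β are linearly independent over ℚ), is not almost periodic: the set of its shifts is not relatively compact in ℓ^∞(ℤ). -/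
/-!
For `k ≠ j` put `d = k - j` and `m = ⌊dα⌋`. Comparing the `k`-th and `j`-th shifts of
`a n = e(⌊nα⌋β)` at `n = -j` and `n = -k` gives `|e(mβ) - 1|` and `|e(⌊-dα⌋β) - 1|` as lower
bounds for their distance. Since `dα` is irrational, `⌊-dα⌋ = -m - 1`, so the two phases add up to
`-β`, and the distance is at least `|e(β) - 1| / 2 > 0`. An infinite uniformly separated family of
shifts cannot lie in a compact set.
-/

open scoped Real

/-- The exponential `e(t) = exp(2πit)` with values in `ℂ`. -/
noncomputable def eX (t : ℝ) : ℂ := Complex.exp (2 * π * Complex.I * t)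

theorem Int.floor_neg_eq_neg_floor_sub_one {R : Type*} [Ring R] [LinearOrder R]
    [IsStrictOrderedRing R] [FloorRing R] {x : R} (hx : x ∉ Set.range Int.cast) :
    ⌊-x⌋ = -⌊x⌋ - 1 := by
  rw [Int.floor_neg, (Int.ceil_eq_floor_add_one_iff_notMem x).2 hx]
  ring

theorem not_isCompact_closure_of_le_dist {X : Type*} [PseudoMetricSpace X] {s : Set X}
    {u : ℕ → X} {ε : ℝ} (hε : 0 < ε) (hus : ∀ n, u n ∈ s)
    (hu : Pairwise fun m n ↦ ε ≤ dist (u m) (u n)) : ¬ IsCompact (closure s) := by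
  intro hs
  obtain ⟨_, -, φ, hφ, hlim⟩ := hs.tendsto_subseq fun n ↦ subset_closure (hus n)
  obtain ⟨N, hN⟩ := Metric.cauchySeq_iff.1 hlim.cauchySeq ε hε
  exact (hN (N + 1) N.le_succ N le_rfl).not_ge (hu (hφ N.lt_succ_self).ne')

lemma eX_zero : eX 0 = 1 := by simp [eX]

lemma eX_add (s t : ℝ) : eX (s + t) = eX s * eX t := by
  simp [eX, mul_add, Complex.exp_add]

lemma norm_eX (t : ℝ) : ‖eX t‖ = 1 := by
  simp [eX, Complex.norm_exp]

lemma eX_eq_one_iff {t : ℝ} : eX t = 1 ↔ t ∈ Set.range Int.cast := by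
  have h2πI : (2 * π * Complex.I : ℂ) ≠ 0 := by simp [Real.pi_ne_zero]
  rw [eX, Complex.exp_eq_one_iff]
  refine exists_congr fun n ↦ ?_
  rw [mul_comm (n : ℂ), mul_right_inj' h2πI, eq_comm]
  exact_mod_cast Iff.rfl

lemma norm_eX_neg_sub_one (t : ℝ) : ‖eX (-t) - 1‖ = ‖eX t - 1‖ := by
  have h : eX (-t) - 1 = -eX (-t) * (eX t - 1) := by
    rw [neg_mul, mul_sub, ← eX_add, neg_add_cancel, eX_zero]
    ring
  rw [h, norm_mul, norm_neg, norm_eX, one_mul]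

lemma norm_eX_add_sub_one_le (s t : ℝ) : ‖eX (s + t) - 1‖ ≤ ‖eX s - 1‖ + ‖eX t - 1‖ := by
  have h : eX (s + t) - 1 = eX s * (eX t - 1) + (eX s - 1) := by
    rw [eX_add]
    ring
  calc ‖eX (s + t) - 1‖ ≤ ‖eX s‖ * ‖eX t - 1‖ + ‖eX s - 1‖ := by
        rw [h, ← norm_mul]
        exact norm_add_le _ _
    _ = ‖eX s - 1‖ + ‖eX t - 1‖ := by rw [norm_eX, one_mul, add_comm]

noncomputable def floorPhase (α β : ℝ) (n : ℤ) : ℂ := eX (⌊(n : ℝ) * α⌋ * β)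

lemma floorPhase_zero (α β : ℝ) : floorPhase α β 0 = 1 := by simp [floorPhase, eX_zero]

lemma dist_floorPhase_le_two (α β : ℝ) (m n : ℤ) :
    dist (floorPhase α β m) (floorPhase α β n) ≤ 2 := by
  rw [dist_eq_norm]
  refine (norm_sub_le _ _).trans_eq ?_
  rw [floorPhase, floorPhase, norm_eX, norm_eX, one_add_one_eq_two]

noncomputable def floorPhaseShift (α β : ℝ) (k : ℤ) : BoundedContinuousFunction ℤ ℂ :=
  BoundedContinuousFunction.mkOfDiscrete (fun n ↦ floorPhase α β (n + k)) 2
    fun _ _ ↦ dist_floorPhase_le_two α β _ _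

lemma floorPhaseShift_apply (α β : ℝ) (k n : ℤ) :
    floorPhaseShift α β k n = floorPhase α β (n + k) := rfl

lemma norm_floorPhase_sub_one_le_dist (α β : ℝ) (k j : ℤ) :
    ‖floorPhase α β (k - j) - 1‖ ≤ dist (floorPhaseShift α β k) (floorPhaseShift α β j) := by
  have h := (floorPhaseShift α β k).dist_coe_le_dist (g := floorPhaseShift α β j) (-j)
  rwa [floorPhaseShift_apply, floorPhaseShift_apply, neg_add_cancel, floorPhase_zero,
    neg_add_eq_sub, dist_eq_norm] at h

lemma norm_eX_sub_one_le_two_mul_dist_floorPhaseShift {α : ℝ} (hα : Irrational α) (β : ℝ)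
    {k j : ℤ} (hkj : k ≠ j) :
    ‖eX β - 1‖ ≤ 2 * dist (floorPhaseShift α β k) (floorPhaseShift α β j) := by
  have hd : (((k - j : ℤ) : ℝ) * α) ∉ Set.range Int.cast := by
    rintro ⟨n, hn⟩
    exact (hα.intCast_mul (sub_ne_zero.2 hkj)).ne_int n hn.symm
  have hfloor : ⌊((j - k : ℤ) : ℝ) * α⌋ = -⌊((k - j : ℤ) : ℝ) * α⌋ - 1 := by
    rw [← Int.floor_neg_eq_neg_floor_sub_one hd, ← neg_sub, Int.cast_neg, neg_mul]
  have hphases : (⌊((k - j : ℤ) : ℝ) * α⌋ : ℝ) * β + (⌊((j - k : ℤ) : ℝ) * α⌋ : ℝ) * β = -β := by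
    rw [hfloor]
    push_cast
    ring
  calc ‖eX β - 1‖ = ‖eX (-β) - 1‖ := (norm_eX_neg_sub_one β).symm
    _ ≤ ‖floorPhase α β (k - j) - 1‖ + ‖floorPhase α β (j - k) - 1‖ := by
      rw [← hphases]
      exact norm_eX_add_sub_one_le _ _
    _ ≤ dist (floorPhaseShift α β k) (floorPhaseShift α β j)
        + dist (floorPhaseShift α β j) (floorPhaseShift α β k) :=
      add_le_add (norm_floorPhase_sub_one_le_dist α β k j)
        (norm_floorPhase_sub_one_le_dist α β j k)
    _ = 2 * dist (floorPhaseShift α β k) (floorPhaseShift α β j) := by rw [dist_comm]; ring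

/-- If `1, α, β` are linearly independent over `ℚ`, then the sequence `(e(⌊nα⌋β))_{n∈ℤ}` is
not almost periodic: the set of its shifts is not relatively compact in `ℓ^∞(ℤ)`. -/
theorem stmt12 (α β : ℝ)
    (hind : ∀ k₀ k₁ k₂ : ℤ, (k₁ : ℝ) * α + (k₂ : ℝ) * β = (k₀ : ℝ) →
      k₀ = 0 ∧ k₁ = 0 ∧ k₂ = 0) :
    ¬ IsCompact (closure
      {c : BoundedContinuousFunction ℤ ℂ |
        ∃ k : ℤ, ∀ n : ℤ, c n = eX ((⌊((n + k : ℤ) : ℝ) * α⌋ : ℝ) * β)}) := by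
  have hα : Irrational α := by
    rintro ⟨q, rfl⟩
    have h := hind q.num q.den 0 (by rw [Int.cast_zero, zero_mul, add_zero]; exact_mod_cast q.den_mul_eq_num)
    exact q.den_nz (by exact_mod_cast h.2.1)
  have hβ : 0 < ‖eX β - 1‖ := by
    refine norm_pos_iff.2 (sub_ne_zero.2 fun h ↦ ?_)
    obtain ⟨n, hn⟩ := eX_eq_one_iff.1 h
    exact one_ne_zero (hind n 0 1 (by simp [hn])).2.2
  refine not_isCompact_closure_of_le_dist (u := fun n : ℕ ↦ floorPhaseShift α β n)
    (half_pos hβ) (fun n ↦ ⟨n, fun _ ↦ rfl⟩) fun m n hmn ↦ ?_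
  have := norm_eX_sub_one_le_two_mul_dist_floorPhaseShift hα β (Nat.cast_injective.ne hmn)
  linarith
end
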